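/- arXiv:1202.2304 — 6 statements merged into one kernel-verified Lean document; each statement's English description precedes it below -/
import Mathlib

section
/- Let p be an odd prime. Then any two vertices of the Platonic graph Π_p are joined by a path of length at most 3; that is, the diameter of Π_p is at most 3. -/
/-- Pairs `(λ, μ) ∈ (ℤ/N)²` with `gcd(λ, μ, N) = 1`. -/
abbrev PlatonicPair (N : ℕ) : Type :=
  {x : ZMod N × ZMod N // Nat.gcd (Nat.gcd x.1.val x.2.val) N = 1}

/-- Identify `(λ,μ)` with `(-λ,-μ)`. -/
instance platonicSetoid (N : ℕ) : Setoid (PlatonicPair N) where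
  r x y := y.val = x.val ∨ y.val = -x.val
  iseqv := by
    refine ⟨fun _ => Or.inl rfl, ?_, ?_⟩
    · rintro x y (h | h)
      · exact Or.inl h.symm
      · right; rw [h, neg_neg]
    · rintro x y z (h1 | h1) (h2 | h2)
      · exact Or.inl (h2.trans h1)
      · right; rw [h2, h1]
      · right; rw [h2, h1]
      · left; rw [h2, h1, neg_neg]

/-- Vertices of the Platonic graph: classes `[λ,μ] = {(λ,μ), (-λ,-μ)}`. -/
abbrev PlatonicVertex (N : ℕ) : Type := Quotient (platonicSetoid N)

/-- The Platonic graph `Π_N`: distinct classes `[λ,μ]`, `[ν,ω]` are adjacent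
iff `λω - μν = ±1` in `ℤ/N`. -/
def Platonic (N : ℕ) : SimpleGraph (PlatonicVertex N) where
  Adj a b := a ≠ b ∧ ∃ x y : PlatonicPair N, ⟦x⟧ = a ∧ ⟦y⟧ = b ∧
    (x.val.1 * y.val.2 - x.val.2 * y.val.1 = 1 ∨
     x.val.1 * y.val.2 - x.val.2 * y.val.1 = -1)
  symm := by
    constructor
    rintro a b ⟨hne, x, y, hx, hy, hdet⟩
    refine ⟨hne.symm, y, x, hy, hx, ?_⟩
    rcases hdet with h | h
    · right; linear_combination -h
    · left; linear_combination -h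
  loopless := ⟨fun a h => h.1 rfl⟩

instance platonicDecRel (N : ℕ) :
    DecidableRel (α := PlatonicPair N) (· ≈ ·) := fun x y =>
  inferInstanceAs (Decidable (y.val = x.val ∨ y.val = -x.val))

instance (N : ℕ) : DecidableEq (PlatonicVertex N) :=
  @Quotient.decidableEq _ _ (platonicDecRel N)

instance (N : ℕ) [NeZero N] : Fintype (PlatonicVertex N) :=
  Quotient.fintype _

instance platonicAdjDec (N : ℕ) [NeZero N] : DecidableRel (Platonic N).Adj := fun a b =>
  inferInstanceAs (Decidable (a ≠ b ∧ ∃ x y : PlatonicPair N, ⟦x⟧ = a ∧ ⟦y⟧ = b ∧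
    (x.val.1 * y.val.2 - x.val.2 * y.val.1 = 1 ∨
     x.val.1 * y.val.2 - x.val.2 * y.val.1 = -1)))

/-- The class of `(λ,μ)` has nonvanishing second coordinate. -/
def secondNZ (N : ℕ) (v : PlatonicVertex N) : Prop :=
  ∀ x : PlatonicPair N, ⟦x⟧ = v → x.val.2 ≠ 0

instance (N : ℕ) [NeZero N] : DecidablePred (secondNZ N) := fun _ =>
  Fintype.decidableForallFintype

/-- The modified Platonic graph `Π_p'`: induced subgraph of `Π_p` on the classes
`[λ,μ]` with `μ ≠ 0`. -/
def ModPlatonic (N : ℕ) : SimpleGraph {v : PlatonicVertex N | secondNZ N v} :=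
  SimpleGraph.induce {v : PlatonicVertex N | secondNZ N v} (Platonic N)

instance (N : ℕ) [NeZero N] : DecidableRel (ModPlatonic N).Adj := fun a b =>
  inferInstanceAs (Decidable ((Platonic N).Adj a b))

/-!
Over the field `ℤ/p`, two classes `[x]`, `[y]` are adjacent as soon as `det x y = 1`. Two
independent vectors `x`, `y` have the common neighbour `(y - x) / det x y`, so they are at
distance at most 2. If `x` and `y` are parallel, first step from `x` to any `u` with
`det x u = 1`; such a `u` is independent of `y`, which is then at distance at most 2 from `u`.
-/

namespace PlatonicPair

def det {N : ℕ} (x y : PlatonicPair N) : ZMod N :=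
  x.val.1 * y.val.2 - x.val.2 * y.val.1

variable {p : ℕ} [hp : Fact p.Prime]

lemma gcd_val_eq_one_iff (x : ZMod p × ZMod p) :
    Nat.gcd (Nat.gcd x.1.val x.2.val) p = 1 ↔ x ≠ 0 := by
  have hdvd_val (a : ZMod p) : p ∣ a.val ↔ a = 0 := by
    rw [← ZMod.natCast_eq_zero_iff, ZMod.natCast_zmod_val]
  rw [Nat.gcd_comm, ← Nat.Coprime, Nat.Prime.coprime_iff_not_dvd hp.out, Nat.dvd_gcd_iff,
    hdvd_val, hdvd_val, Ne, Prod.ext_iff]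
  rfl

def ofNeZero (x : ZMod p × ZMod p) (hx : x ≠ 0) : PlatonicPair p :=
  ⟨x, (gcd_val_eq_one_iff x).2 hx⟩

lemma val_ne_zero (x : PlatonicPair p) : x.val ≠ 0 :=
  (gcd_val_eq_one_iff x.val).1 x.property

lemma exists_det_eq_one (x : PlatonicPair p) : ∃ u : PlatonicPair p, det x u = 1 := by
  obtain ⟨⟨a, b⟩, hx⟩ := x
  by_cases ha : a = 0
  · have hb : b ≠ 0 := fun hb => val_ne_zero ⟨(a, b), hx⟩ (by simp [ha, hb])
    exact ⟨ofNeZero (-b⁻¹, 0) (by simp [hb]), by simp [det, ofNeZero, hb]⟩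
  · exact ⟨ofNeZero (0, a⁻¹) (by simp [ha]), by simp [det, ofNeZero, ha]⟩

lemma exists_det_eq_one_and_det_eq_one {x y : PlatonicPair p} (hxy : det x y ≠ 0) :
    ∃ u : PlatonicPair p, det x u = 1 ∧ det y u = 1 := by
  have hsub : y.val - x.val ≠ 0 := by
    intro h
    rw [sub_eq_zero] at h
    exact hxy (by rw [det, h]; ring)
  refine ⟨ofNeZero ((det x y)⁻¹ • (y.val - x.val)) (smul_ne_zero (inv_ne_zero hxy) hsub), ?_, ?_⟩ <;>
  · have hinv := mul_inv_cancel₀ hxy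
    simp only [det, ofNeZero, Prod.smul_fst, Prod.smul_snd, Prod.fst_sub, Prod.snd_sub,
      smul_eq_mul] at hinv ⊢
    linear_combination hinv

lemma det_ne_zero_of_det_eq_zero {x y u : PlatonicPair p} (hxy : det x y = 0)
    (hxu : det x u = 1) : det u y ≠ 0 := by
  intro huy
  apply val_ne_zero y
  unfold det at hxy hxu huy
  refine Prod.ext ?_ ?_
  · rw [Prod.fst_zero]
    linear_combination -y.val.1 * hxu + u.val.1 * hxy - x.val.1 * huy
  · rw [Prod.snd_zero]
    linear_combination -y.val.2 * hxu + u.val.2 * hxy - x.val.2 * huy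

end PlatonicPair

open PlatonicPair

lemma platonic_adj_of_det_eq_one {N : ℕ} [Fact (1 < N)] {x y : PlatonicPair N}
    (h : det x y = 1) : (Platonic N).Adj ⟦x⟧ ⟦y⟧ := by
  refine ⟨fun hxy => ?_, x, y, rfl, rfl, Or.inl h⟩
  rcases Quotient.exact hxy with hyx | hyx <;>
    simp [det, hyx] at h <;> ring_nf at h <;> exact zero_ne_one h

lemma platonic_exists_walk_length_two {p : ℕ} [Fact p.Prime] {x y : PlatonicPair p}
    (hxy : det x y ≠ 0) : ∃ w : (Platonic p).Walk ⟦x⟧ ⟦y⟧, w.length = 2 := by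
  obtain ⟨u, hxu, hyu⟩ := exists_det_eq_one_and_det_eq_one hxy
  exact ⟨.cons (platonic_adj_of_det_eq_one hxu)
    (.cons (platonic_adj_of_det_eq_one hyu).symm .nil), rfl⟩

theorem platonic_diam_le_three_general (p : ℕ) (hp : p.Prime)
    (a b : PlatonicVertex p) :
    ∃ w : (Platonic p).Walk a b, w.length ≤ 3 := by
  have := Fact.mk hp
  have := Fact.mk hp.one_lt
  induction a using Quotient.inductionOn with | h x => ?_
  induction b using Quotient.inductionOn with | h y => ?_
  by_cases hxy : det x y = 0
  · obtain ⟨u, hxu⟩ := exists_det_eq_one x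
    obtain ⟨w, hw⟩ := platonic_exists_walk_length_two (det_ne_zero_of_det_eq_zero hxy hxu)
    exact ⟨.cons (platonic_adj_of_det_eq_one hxu) w, by simp [hw]⟩
  · obtain ⟨w, hw⟩ := platonic_exists_walk_length_two hxy
    exact ⟨w, by omega⟩

/-- Any two vertices of the Platonic graph `Π_p`, for an odd prime `p`, are joined
by a walk of length at most `3`; i.e. the diameter of `Π_p` is at most `3`. -/
theorem platonic_diam_le_three (p : ℕ) (hp : p.Prime) (hodd : Odd p)
    (a b : PlatonicVertex p) :
    ∃ w : (Platonic p).Walk a b, w.length ≤ 3 :=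
  platonic_diam_le_three_general p hp a b
end

section
/- Let p be an odd prime. Then any two vertices of the modified Platonic graph Π_p' are joined by a path of length at most 3 inside Π_p'; that is, the diameter of Π_p' is at most 3. -/
/-!
A vertex `a = [a₁, a₂]` with `a₂ ≠ 0` is adjacent to `u = [(a₁ + s)/a₂, 1]` for `s = ±1`, and
`b = [b₁, b₂]` is adjacent to every `v = [(b₁δ + 1)/b₂, δ]`. Then `det(u, v) = r` exactly when
`δ = a₂(1 + r b₂) / (det(a, b) + s b₂)`. As `p` is odd, the signs `s, r = ±1` can be chosen to
make numerator and denominator nonzero, so that `δ`, the second coordinate of `v`, is nonzero.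
-/

def det2 {R : Type*} [CommRing R] (u v : R × R) : R := u.1 * v.2 - u.2 * v.1

def IsSign {R : Type*} [Ring R] (x : R) : Prop := x = 1 ∨ x = -1

lemma IsSign.neg {R : Type*} [Ring R] {x : R} (h : IsSign x) : IsSign (-x) := by
  rcases h with rfl | rfl
  · exact Or.inr rfl
  · exact Or.inl (neg_neg 1)

section Sign

variable {R : Type*} [CommRing R] [NoZeroDivisors R]

lemma exists_isSign_add_mul_ne_zero (h2 : (2 : R) ≠ 0) (c : R) {x : R} (hx : x ≠ 0) :
    ∃ s : R, IsSign s ∧ c + s * x ≠ 0 := by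
  by_cases hc : c + 1 * x = 0
  · refine ⟨-1, Or.inr rfl, fun h => mul_ne_zero h2 hx ?_⟩
    linear_combination hc - h
  · exact ⟨1, Or.inl rfl, hc⟩

end Sign

section Path

variable {F : Type*} [Field F]

lemma det2_add_div_one (a : F × F) (ha : a.2 ≠ 0) (t : F) : det2 a ((a.1 + t) / a.2, 1) = -t := by
  simp only [det2]
  field_simp
  ring

lemma det2_div_left (b : F × F) (hb : b.2 ≠ 0) (δ : F) : det2 ((b.1 * δ + 1) / b.2, δ) b = 1 := by
  simp only [det2]
  field_simp
  ring

lemma exists_isSign_det2_path (h2 : (2 : F) ≠ 0) {a b : F × F} (ha : a.2 ≠ 0) (hb : b.2 ≠ 0) :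
    ∃ u v : F × F, u.2 ≠ 0 ∧ v.2 ≠ 0 ∧
      IsSign (det2 a u) ∧ IsSign (det2 u v) ∧ IsSign (det2 v b) := by
  obtain ⟨s, hs, hD⟩ := exists_isSign_add_mul_ne_zero h2 (det2 a b) hb
  obtain ⟨r, hr, hN⟩ := exists_isSign_add_mul_ne_zero h2 1 hb
  set δ := a.2 * (1 + r * b.2) / (det2 a b + s * b.2) with hδ
  have hδ0 : δ ≠ 0 := div_ne_zero (mul_ne_zero ha hN) hD
  refine ⟨((a.1 + s) / a.2, 1), ((b.1 * δ + 1) / b.2, δ), one_ne_zero, hδ0, ?_, ?_, ?_⟩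
  · exact det2_add_div_one a ha s ▸ hs.neg
  · suffices det2 ((a.1 + s) / a.2, 1) ((b.1 * δ + 1) / b.2, δ) = r from this ▸ hr
    rw [hδ]
    unfold det2 at hD ⊢
    field_simp
    ring
  · exact Or.inl (det2_div_left b hb δ)

end Path

section Platonic

variable {N : ℕ}

lemma gcd_val_eq_one_of_isUnit {y : ZMod N} (hy : IsUnit y) (x : ZMod N) :
    Nat.gcd (Nat.gcd x.val y.val) N = 1 := by
  obtain ⟨u, rfl⟩ := hy
  exact Nat.Coprime.coprime_dvd_left (Nat.gcd_dvd_right _ _) (ZMod.val_coe_unit_coprime u)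

def PlatonicPair.ofUnit (u : ZMod N × ZMod N) (hu : IsUnit u.2) : PlatonicPair N :=
  ⟨u, gcd_val_eq_one_of_isUnit hu u.1⟩

lemma secondNZ_mk {x : PlatonicPair N} (hx : x.val.2 ≠ 0) :
    secondNZ N (⟦x⟧ : PlatonicVertex N) := by
  intro z hz
  rcases Quotient.exact hz with h | h
  · rwa [h] at hx
  · rwa [h, Prod.snd_neg, neg_ne_zero] at hx

lemma platonic_adj_mk_of_isSign [Nontrivial (ZMod N)] {x y : PlatonicPair N}
    (h : IsSign (det2 x.val y.val)) : (Platonic N).Adj ⟦x⟧ ⟦y⟧ := by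
  refine ⟨fun hxy => ?_, x, y, rfl, rfl, h⟩
  have h0 : det2 x.val y.val = 0 := by
    rcases Quotient.exact hxy with h' | h' <;> simp only [det2, h', Prod.fst_neg, Prod.snd_neg] <;>
      ring
  rcases h with h | h <;> rw [h0] at h
  · exact zero_ne_one h
  · exact zero_ne_one (neg_eq_zero.mp h.symm).symm

end Platonic

/-- Any two vertices of the modified Platonic graph `Π_p'`, for an odd prime `p`,
are joined inside `Π_p'` by a walk of length at most `3`; i.e. `diam Π_p' ≤ 3`. -/
theorem modPlatonic_diam_le_three (p : ℕ) (hp : p.Prime) (hodd : Odd p)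
    (a b : {v : PlatonicVertex p | secondNZ p v}) :
    ∃ w : (ModPlatonic p).Walk a b, w.length ≤ 3 := by
  have : Fact p.Prime := ⟨hp⟩
  have h2 : (2 : ZMod p) ≠ 0 :=
    Ring.two_ne_zero (by rw [ZMod.ringChar_zmod_n]; rintro rfl; exact absurd hodd (by decide))
  obtain ⟨x, hxa⟩ := Quotient.exists_rep (a : PlatonicVertex p)
  obtain ⟨y, hyb⟩ := Quotient.exists_rep (b : PlatonicVertex p)
  obtain ⟨u, v, hu, hv, hxu, huv, hvy⟩ :=
    exists_isSign_det2_path h2 (a.2 _ hxa) (b.2 _ hyb)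
  let U := PlatonicPair.ofUnit u hu.isUnit
  let V := PlatonicPair.ofUnit v hv.isUnit
  have e1 : (ModPlatonic p).Adj a ⟨⟦U⟧, secondNZ_mk hu⟩ :=
    (hxa ▸ platonic_adj_mk_of_isSign hxu : (Platonic p).Adj a ⟦U⟧)
  have e2 : (ModPlatonic p).Adj ⟨⟦U⟧, secondNZ_mk hu⟩ ⟨⟦V⟧, secondNZ_mk hv⟩ :=
    platonic_adj_mk_of_isSign huv
  have e3 : (ModPlatonic p).Adj ⟨⟦V⟧, secondNZ_mk hv⟩ b :=
    (hyb ▸ platonic_adj_mk_of_isSign hvy : (Platonic p).Adj ⟦V⟧ b)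
  exact ⟨.cons e1 (.cons e2 (.cons e3 .nil)), le_rfl⟩
end

section
/- Let p be an odd prime. Then the (p−1)-regular graph Π_p' is Ramanujan: every real eigenvalue μ of the adjacency matrix of Π_p' with |μ| ≠ p−1 satisfies |μ| ≤ 2·√(p−2). -/
/-!
Write the vertex `[xu, u]` of `Π_p'` as `(x, ±u)` with `u ≠ 0`; its neighbours are then
`(x + t, ±(ut)⁻¹)` for `t ≠ 0`. An eigenfunction becomes a function `g` on `𝔽_p²`, even in `u`
and vanishing at `u = 0`, with `∑ₜ g (x + t) (ut)⁻¹ = μ g x u`. Applying this operator twice and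
counting the solutions of a Möbius equation gives `A²g = p g + S - R g - C g`, where `S` is the
total sum of `g` and `R g`, `C g` are its row and column sums. Summing the eigenvalue equation
along rows and columns gives `(μ + 1) R g = S` and `μ C g = S`. Hence `μ = p - 1`, or
`μ ∈ {0, -1}`, or `S`, `R g`, `C g` all vanish and `μ² = p`; for `p ≥ 3` each of `0, -1, ±√p`
is at most `2√(p - 2)` in absolute value.
-/

open Finset

lemma sum_units_eq_sum {K M : Type*} [GroupWithZero K] [Fintype K] [DecidableEq K]
    [AddCommMonoid M] {φ : K → M} (h0 : φ 0 = 0) : ∑ t : Kˣ, φ t = ∑ t, φ t := by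
  refine (sum_map univ ⟨Units.val, Units.val_injective⟩ φ).symm.trans ?_
  refine sum_subset (subset_univ _) fun t _ ht => ?_
  obtain rfl : t = 0 := by
    by_contra h
    exact ht (mem_map_of_mem _ (mem_univ (Units.mk0 t h)))
  exact h0

-- `t ↦ ut/(d - t)` maps `F ∖ {d}` bijectively onto `F ∖ {-u}`, and `d ↦ 0` since `0⁻¹ = 0`.
lemma sum_comp_mobius {F M : Type*} [Field F] [Fintype F] [DecidableEq F] [AddCommGroup M]
    {u d : F} (hu : u ≠ 0) (hd : d ≠ 0) (h : F → M) :
    ∑ t, h (u * t * (d - t)⁻¹) = ∑ v, h v - h (-u) + h 0 := by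
  have hmaps : ∑ t ∈ univ.erase d, h (u * t * (d - t)⁻¹) = ∑ v ∈ univ.erase (-u), h v := by
    refine sum_nbij' (fun t => u * t * (d - t)⁻¹) (fun v => d * v * (u + v)⁻¹)
      (fun t ht => ?_) (fun v hv => ?_) (fun t ht => ?_) (fun v hv => ?_) fun _ _ => rfl
    · have htd : d - t ≠ 0 := sub_ne_zero.2 (ne_of_mem_erase ht).symm
      refine mem_erase.2 ⟨fun h' => hd ?_, mem_univ _⟩
      rw [mul_inv_eq_iff_eq_mul₀ htd] at h'
      simpa [hu] using (by linear_combination h' : u * d = 0)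
    · have huv : u + v ≠ 0 := fun h' => ne_of_mem_erase hv (by linear_combination h')
      refine mem_erase.2 ⟨fun h' => hu ?_, mem_univ _⟩
      rw [mul_inv_eq_iff_eq_mul₀ huv] at h'
      simpa [hd] using (by linear_combination -h' : d * u = 0)
    · have htd : d - t ≠ 0 := sub_ne_zero.2 (ne_of_mem_erase ht).symm
      have hsum : u + u * t * (d - t)⁻¹ = u * d * (d - t)⁻¹ := by field_simp; ring
      rw [hsum]
      field_simp
    · have huv : u + v ≠ 0 := fun h' => ne_of_mem_erase hv (by linear_combination h')
      have hdiff : d - d * v * (u + v)⁻¹ = d * u * (u + v)⁻¹ := by field_simp; ring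
      rw [hdiff]
      field_simp
  rw [← add_sum_erase _ _ (mem_univ d), hmaps, sum_erase_eq_sub (mem_univ _), sub_self, inv_zero,
    mul_zero]
  abel

lemma abs_le_two_mul_sqrt_sub_two {μ q : ℝ} (hq : 3 ≤ q) (hμ : μ ^ 2 ≤ q) :
    |μ| ≤ 2 * √(q - 2) := by
  refine abs_le_of_sq_le_sq ?_ (by positivity)
  rw [mul_pow, Real.sq_sqrt (by linarith)]
  linarith

theorem Platonic.adj_mk_iff {N : ℕ} (a b : PlatonicPair N) :
    (Platonic N).Adj ⟦a⟧ ⟦b⟧ ↔ (⟦a⟧ : PlatonicVertex N) ≠ ⟦b⟧ ∧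
      (a.1.1 * b.1.2 - a.1.2 * b.1.1 = 1 ∨ a.1.1 * b.1.2 - a.1.2 * b.1.1 = -1) := by
  refine ⟨fun ⟨hne, x, y, hx, hy, hdet⟩ => ⟨hne, ?_⟩,
    fun ⟨hne, hdet⟩ => ⟨hne, a, b, rfl, rfl, hdet⟩⟩
  rcases Quotient.exact hx with ha | ha <;> rcases Quotient.exact hy with hb | hb <;>
    simp only [ha, hb, Prod.fst_neg, Prod.snd_neg] <;> rcases hdet with h | h
  all_goals first
    | exact Or.inl (by linear_combination h)
    | exact Or.inr (by linear_combination h)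
    | exact Or.inl (by linear_combination -h)
    | exact Or.inr (by linear_combination -h)

abbrev ModPlatonicVertex (N : ℕ) : Type := {v : PlatonicVertex N | secondNZ N v}

namespace ModPlatonic

section CoordinateOperator

variable {F : Type*} [Field F] [Fintype F]

-- The term `t = 0` is `g x 0` (as `0⁻¹ = 0`), so it drops out for the functions `g` used here.
def coordAdj (g : F → F → ℝ) (x u : F) : ℝ := ∑ t, g (x + t) (u * t)⁻¹

variable {g : F → F → ℝ}

lemma coordAdj_coordAdj [DecidableEq F] (hzero : ∀ x, g x 0 = 0)
    (heven : ∀ x u, g x (-u) = g x u) (x : F) {u : F} (hu : u ≠ 0) :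
    coordAdj (coordAdj g) x u =
      Fintype.card F * g x u + ∑ y, ∑ v, g y v - ∑ v, g x v - ∑ y, g y u := by
  have hshift : ∀ t, coordAdj g (x + t) (u * t)⁻¹ = ∑ y, g y (u * t * (y - x - t)⁻¹) := by
    intro t
    rw [coordAdj, ← (Equiv.subRight (x + t)).sum_comp]
    refine sum_congr rfl fun y _ => ?_
    simp only [Equiv.subRight_apply, add_sub_cancel, mul_inv, inv_inv, sub_sub]
  have hinner : ∀ y, ∑ t, g y (u * t * (y - x - t)⁻¹) =
      ∑ v, g y v - g y u + if y = x then Fintype.card F * g x u - ∑ v, g x v else 0 := by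
    intro y
    by_cases hyx : y = x
    · subst hyx
      have hterm : ∀ t, g y (u * t * (y - y - t)⁻¹) = g y u - if t = 0 then g y u else 0 := by
        intro t
        split_ifs with ht
        · simp [ht, hzero]
        · rw [sub_zero, sub_self, zero_sub, inv_neg, mul_neg, mul_inv_cancel_right₀ ht, heven]
      rw [sum_congr rfl fun t _ => hterm t, if_pos rfl]
      simp [sum_sub_distrib]
    · rw [sum_comp_mobius hu (sub_ne_zero.2 hyx), heven, hzero, if_neg hyx]
  calc coordAdj (coordAdj g) x u = ∑ t, ∑ y, g y (u * t * (y - x - t)⁻¹) :=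
        sum_congr rfl fun t _ => hshift t
    _ = _ := by
      rw [sum_comm, sum_congr rfl fun y _ => hinner y]
      simp only [sum_add_distrib, sum_sub_distrib, sum_ite_eq', mem_univ, if_true]
      ring

lemma sum_coordAdj_snd [DecidableEq F] (hzero : ∀ x, g x 0 = 0) (x : F) :
    ∑ u, coordAdj g x u = ∑ y, ∑ v, g y v - ∑ v, g x v := by
  have hinner : ∀ t, ∑ u, g (x + t) (u * t)⁻¹ =
      ∑ v, g (x + t) v - if t = 0 then ∑ v, g x v else 0 := by
    intro t
    split_ifs with ht
    · simp [ht, hzero]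
    · rw [sub_zero]
      exact ((Equiv.mulRight₀ t ht).trans (Equiv.inv F)).sum_comp fun v => g (x + t) v
  unfold coordAdj
  have hshift : ∑ t, ∑ v, g (x + t) v = ∑ y, ∑ v, g y v :=
    Equiv.sum_comp (Equiv.addLeft x) fun y => ∑ v, g y v
  rw [sum_comm, sum_congr rfl fun t _ => hinner t, sum_sub_distrib, hshift]
  simp

lemma sum_coordAdj_fst {u : F} (hu : u ≠ 0) :
    ∑ x, coordAdj g x u = ∑ y, ∑ v, g y v := by
  unfold coordAdj
  rw [sum_comm]
  calc ∑ t, ∑ x, g (x + t) (u * t)⁻¹ = ∑ t, ∑ y, g y (u * t)⁻¹ :=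
        sum_congr rfl fun t _ => Equiv.sum_comp (Equiv.addRight t) fun y => g y (u * t)⁻¹
    _ = ∑ y, ∑ v, g y v := by
      rw [sum_comm]
      exact sum_congr rfl fun y _ =>
        ((Equiv.mulLeft₀ u hu).trans (Equiv.inv F)).sum_comp fun v => g y v

theorem coordAdj_eigenvalue_cases [DecidableEq F] {μ : ℝ} (hzero : ∀ x, g x 0 = 0)
    (heven : ∀ x u, g x (-u) = g x u) (heig : ∀ x u, coordAdj g x u = μ * g x u)
    (hg : ∃ x u, g x u ≠ 0) :
    μ = Fintype.card F - 1 ∨ μ = 0 ∨ μ = -1 ∨ μ ^ 2 = Fintype.card F := by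
  set q : ℝ := (Fintype.card F : ℝ)
  set S := ∑ y, ∑ v, g y v
  obtain ⟨x, u, hxu⟩ := hg
  have hu : u ≠ 0 := by rintro rfl; exact hxu (hzero x)
  have hrow : ∀ y, (μ + 1) * ∑ v, g y v = S := by
    intro y
    have := sum_coordAdj_snd hzero y
    simp only [heig, ← mul_sum] at this
    linear_combination this
  have hcol : μ * ∑ y, g y u = S := by
    rw [mul_sum, ← sum_congr rfl fun y _ => heig y u, sum_coordAdj_fst hu]
  have htotal : (μ + 1 - q) * S = 0 := by
    have := sum_congr rfl fun y (_ : y ∈ univ) => hrow y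
    rw [← mul_sum, sum_const, card_univ, nsmul_eq_mul] at this
    linear_combination this
  have hiter : coordAdj (coordAdj g) x u = μ ^ 2 * g x u := by
    change ∑ t, coordAdj g (x + t) (u * t)⁻¹ = _
    simp only [heig, ← mul_sum]
    rw [← coordAdj, heig]
    ring
  by_cases hq : μ = q - 1
  · exact Or.inl hq
  by_cases h0 : μ = 0
  · exact Or.inr (Or.inl h0)
  by_cases h1 : μ = -1
  · exact Or.inr (Or.inr (Or.inl h1))
  refine Or.inr (Or.inr (Or.inr ?_))
  have hS : S = 0 := (mul_eq_zero.1 htotal).resolve_left fun h => hq (by linarith)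
  have hSx : ∑ v, g x v = 0 :=
    (mul_eq_zero.1 ((hrow x).trans hS)).resolve_left fun h => h1 (by linarith)
  have hTu : ∑ y, g y u = 0 := (mul_eq_zero.1 (hcol.trans hS)).resolve_left h0
  have hfac : (μ ^ 2 - q) * g x u = 0 := by
    linear_combination coordAdj_coordAdj hzero heven x hu - hiter + hS - hSx - hTu
  exact sub_eq_zero.1 ((mul_eq_zero.1 hfac).resolve_right hxu)

end CoordinateOperator

variable {p : ℕ} [Fact p.Prime]

lemma gcd_val_eq_one (a : ZMod p) {u : ZMod p} (hu : u ≠ 0) :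
    Nat.gcd (Nat.gcd a.val u.val) p = 1 := by
  have hcop : Nat.Coprime p u.val :=
    Nat.coprime_of_lt_prime ((ZMod.val_ne_zero u).2 hu) (ZMod.val_lt u) Fact.out
  exact Nat.Coprime.coprime_dvd_left (Nat.gcd_dvd_right _ _) hcop.symm

def coordPair (x : ZMod p) (u : (ZMod p)ˣ) : PlatonicPair p :=
  ⟨(x * u, u), gcd_val_eq_one _ u.ne_zero⟩

def coordVert (x : ZMod p) (u : (ZMod p)ˣ) : ModPlatonicVertex p :=
  ⟨⟦coordPair x u⟧, fun y hy h0 => u.ne_zero <| by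
    rcases Quotient.exact hy with h | h <;> simpa [coordPair, h0] using congrArg Prod.snd h⟩

lemma coordVert_eq_iff {x y : ZMod p} {u v : (ZMod p)ˣ} :
    coordVert x u = coordVert y v ↔ x = y ∧ (v = u ∨ v = -u) := by
  rw [Subtype.ext_iff]
  change ⟦coordPair x u⟧ = ⟦coordPair y v⟧ ↔ _
  rw [Quotient.eq]
  change (y * v, (v : ZMod p)) = (x * u, (u : ZMod p)) ∨
    (y * v, (v : ZMod p)) = -(x * u, (u : ZMod p)) ↔ _
  simp only [Prod.neg_mk, Prod.mk.injEq, Units.ext_iff, Units.val_neg]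
  constructor
  · rintro (⟨h, hv⟩ | ⟨h, hv⟩) <;> rw [hv] at h
    · exact ⟨(mul_right_cancel₀ u.ne_zero h).symm, Or.inl hv⟩
    · exact ⟨(mul_right_cancel₀ u.ne_zero (by linear_combination -h)).symm, Or.inr hv⟩
  · rintro ⟨rfl, hv | hv⟩ <;> rw [hv]
    · exact Or.inl ⟨rfl, rfl⟩
    · exact Or.inr ⟨by ring, rfl⟩

lemma exists_coordVert_eq (w : ModPlatonicVertex p) : ∃ x u, coordVert x u = w := by
  obtain ⟨w, hw⟩ := w
  induction w using Quotient.inductionOn with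
  | h a =>
    have hu : a.1.2 ≠ 0 := hw a rfl
    refine ⟨a.1.1 / a.1.2, Units.mk0 _ hu, Subtype.ext ?_⟩
    change ⟦coordPair _ _⟧ = ⟦a⟧
    congr 1
    exact Subtype.ext (Prod.ext (div_mul_cancel₀ _ hu) rfl)

lemma adj_coordVert_iff {x y : ZMod p} {u v : (ZMod p)ˣ} :
    (ModPlatonic p).Adj (coordVert x u) (coordVert y v) ↔
      (u * v * (x - y) : ZMod p) = 1 ∨ (u * v * (x - y) : ZMod p) = -1 := by
  change (Platonic p).Adj ⟦coordPair x u⟧ ⟦coordPair y v⟧ ↔ _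
  have hdet : x * u * v - u * (y * v) = (u * v * (x - y) : ZMod p) := by ring
  rw [Platonic.adj_mk_iff]
  simp only [coordPair]
  rw [hdet, and_iff_right_iff_imp]
  intro h hxy
  rw [(coordVert_eq_iff.1 (Subtype.ext hxy)).1, sub_self, mul_zero] at h
  simp at h

lemma neighborFinset_coordVert (x : ZMod p) (u : (ZMod p)ˣ) :
    (ModPlatonic p).neighborFinset (coordVert x u) =
      univ.image fun t : (ZMod p)ˣ => coordVert (x + (t : ZMod p)) (u * t)⁻¹ := by
  ext w
  obtain ⟨y, v, rfl⟩ := exists_coordVert_eq w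
  rw [SimpleGraph.mem_neighborFinset, adj_coordVert_iff, mem_image]
  simp only [mem_univ, true_and, coordVert_eq_iff]
  constructor
  · intro h
    have hxy : y - x ≠ 0 := fun h0 => by
      rw [← neg_sub, h0, neg_zero, mul_zero] at h
      simp at h
    refine ⟨Units.mk0 _ hxy, by simp, ?_⟩
    simp only [Units.ext_iff, Units.val_neg, Units.val_inv_eq_inv_val, Units.val_mul,
      Units.val_mk0]
    rcases h with h | h
    · right
      rw [← inv_neg]
      exact eq_inv_of_mul_eq_one_left (by linear_combination h)
    · left
      exact eq_inv_of_mul_eq_one_left (by linear_combination -h)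
  · have hu := u.ne_zero
    rintro ⟨t, rfl, rfl | rfl⟩ <;> have ht := t.ne_zero <;>
      simp only [Units.val_neg, Units.val_inv_eq_inv_val, Units.val_mul]
    · right
      field_simp
      ring
    · left
      field_simp
      ring

def coordLift (f : ModPlatonicVertex p → ℝ) (x u : ZMod p) : ℝ :=
  if hu : u = 0 then 0 else f (coordVert x (Units.mk0 u hu))

variable {f : ModPlatonicVertex p → ℝ}

@[simp]
lemma coordLift_zero (x : ZMod p) : coordLift f x 0 = 0 := dif_pos rfl

@[simp]
lemma coordLift_units (x : ZMod p) (u : (ZMod p)ˣ) : coordLift f x u = f (coordVert x u) := by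
  rw [coordLift, dif_neg u.ne_zero, Units.mk0_val]

lemma coordLift_neg (x u : ZMod p) : coordLift f x (-u) = coordLift f x u := by
  obtain rfl | hu := eq_or_ne u 0
  · rw [neg_zero]
  lift u to (ZMod p)ˣ using hu.isUnit
  rw [← Units.val_neg, coordLift_units, coordLift_units,
    coordVert_eq_iff.2 ⟨rfl, Or.inr (neg_neg u).symm⟩]

lemma coordAdj_coordLift [NeZero p] {μ : ℝ}
    (hf : ((ModPlatonic p).adjMatrix ℝ).mulVec f = μ • f) (x u : ZMod p) :
    coordAdj (coordLift f) x u = μ * coordLift f x u := by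
  obtain rfl | hu := eq_or_ne u 0
  · simp [coordAdj]
  lift u to (ZMod p)ˣ using hu.isUnit
  have hinj : Function.Injective fun t : (ZMod p)ˣ => coordVert (x + (t : ZMod p)) (u * t)⁻¹ :=
    fun t t' h => Units.ext (add_left_cancel (coordVert_eq_iff.1 h).1)
  calc coordAdj (coordLift f) x u
      = ∑ t : (ZMod p)ˣ, coordLift f (x + (t : ZMod p)) (u * t : ZMod p)⁻¹ :=
        (sum_units_eq_sum (by simp)).symm
    _ = ((ModPlatonic p).adjMatrix ℝ).mulVec f (coordVert x u) := by
      rw [SimpleGraph.adjMatrix_mulVec_apply, neighborFinset_coordVert,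
        sum_image fun t _ t' _ h => hinj h]
      refine sum_congr rfl fun t _ => ?_
      rw [← coordLift_units (f := f), Units.val_inv_eq_inv_val, Units.val_mul]
    _ = μ * coordLift f x u := by rw [hf, Pi.smul_apply, smul_eq_mul, coordLift_units]

lemma exists_coordLift_ne_zero (hf : f ≠ 0) : ∃ x u, coordLift f x u ≠ 0 := by
  obtain ⟨w, hw⟩ := Function.ne_iff.1 hf
  obtain ⟨x, u, rfl⟩ := exists_coordVert_eq w
  exact ⟨x, u, by simpa using hw⟩

end ModPlatonic

/-- The `(p-1)`-regular graph `Π_p'` is Ramanujan for every odd prime `p`: any real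
eigenvalue `μ` of its adjacency matrix with `|μ| ≠ p - 1` satisfies `|μ| ≤ 2√(p-2)`. -/
theorem modPlatonic_ramanujan (p : ℕ) (hp : p.Prime) (hodd : Odd p) [NeZero p]
    (μ : ℝ)
    (hev : ∃ f : {v : PlatonicVertex p | secondNZ p v} → ℝ, f ≠ 0 ∧
      ((ModPlatonic p).adjMatrix ℝ).mulVec f = μ • f)
    (hne : |μ| ≠ (p : ℝ) - 1) :
    |μ| ≤ 2 * Real.sqrt ((p : ℝ) - 2) := by
  have : Fact p.Prime := ⟨hp⟩
  obtain ⟨f, hf, hmul⟩ := hev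
  have hp3 : (3 : ℝ) ≤ p := by
    have := Nat.odd_iff.1 hodd
    have := hp.two_le
    exact_mod_cast (by omega : 3 ≤ p)
  have hspec := ModPlatonic.coordAdj_eigenvalue_cases ModPlatonic.coordLift_zero
    ModPlatonic.coordLift_neg (ModPlatonic.coordAdj_coordLift hmul)
    (ModPlatonic.exists_coordLift_ne_zero hf)
  rw [ZMod.card] at hspec
  rcases hspec with h | h | h | h
  · exact absurd (by rw [h, abs_of_nonneg (by linarith)]) hne
  all_goals refine abs_le_two_mul_sqrt_sub_two hp3 ?_
  · rw [h]; linarith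
  · rw [h]; linarith
  · exact h.le
end

section
/- Let T be a square matrix with rational entries, regarded as a matrix over ℝ, and let K be a positive integer which is not a perfect square. Then the dimension of the eigenspace of T for the eigenvalue √K equals the dimension of the eigenspace of T for the eigenvalue −√K. -/
open Matrix Polynomial

section Transfer

variable {F L : Type*} [Field F] [Field L]

private lemma mulVec_eq_sum' {k n : ℕ} (v : Fin k → (Fin n → F)) (c : Fin k → F) :
    (Matrix.of fun j i => v i j).mulVec c = ∑ i, c i • v i := by
  funext j
  simp [Matrix.mulVec, dotProduct, Finset.sum_apply, mul_comm]

/-- Linear independence of vectors in `Fⁿ` is preserved by a field embedding. -/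
private lemma linearIndependent_comp_map (f : F →+* L) {k n : ℕ} {v : Fin k → (Fin n → F)}
    (hv : LinearIndependent F v) :
    LinearIndependent L (fun i => f ∘ v i) := by
  set A : Matrix (Fin n) (Fin k) F := Matrix.of fun j i => v i j with hA
  have hker : LinearMap.ker (Matrix.toLin' A) = ⊥ := by
    rw [LinearMap.ker_eq_bot']
    intro c hc
    rw [Matrix.toLin'_apply, mulVec_eq_sum'] at hc
    funext i
    exact Fintype.linearIndependent_iff.mp hv c hc i
  obtain ⟨g, hg⟩ := (Matrix.toLin' A).exists_leftInverse_of_injective hker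
  have hBA : (LinearMap.toMatrix' g) * A = 1 := by
    have := congrArg LinearMap.toMatrix' hg
    rwa [LinearMap.toMatrix'_comp, LinearMap.toMatrix'_toLin', LinearMap.toMatrix'_id] at this
  have hBA' : (LinearMap.toMatrix' g).map f * A.map f = 1 := by
    rw [← Matrix.map_mul, hBA, Matrix.map_one f (map_zero f) (map_one f)]
  rw [Fintype.linearIndependent_iff]
  intro c hc
  have hmv : (A.map f).mulVec c = 0 := by
    have h2 : (Matrix.of fun j i => (f ∘ v i) j).mulVec c = 0 := by
      rw [mulVec_eq_sum', hc]
    exact h2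
  have hcz : c = 0 := by
    have h1 : ((LinearMap.toMatrix' g).map f).mulVec ((A.map f).mulVec c) = c := by
      rw [Matrix.mulVec_mulVec, hBA', Matrix.one_mulVec]
    rw [hmv, Matrix.mulVec_zero] at h1
    exact h1.symm
  exact fun i => congrFun hcz i

private lemma map_mulVec' (f : F →+* L) {k n : ℕ} (M : Matrix (Fin n) (Fin k) F)
    (w : Fin k → F) : (M.map f).mulVec (f ∘ w) = f ∘ (M.mulVec w) := by
  funext j
  simp [Matrix.mulVec, dotProduct, map_sum]

private lemma exists_linIndep_of_submodule {n : ℕ} (W : Submodule F (Fin n → F)) :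
    ∃ v : Fin (Module.finrank F W) → (Fin n → F),
      LinearIndependent F v ∧ ∀ i, v i ∈ W := by
  let b := Module.finBasis F W
  exact ⟨fun i => (b i : Fin n → F),
    b.linearIndependent.map' W.subtype W.ker_subtype, fun i => (b i).2⟩

private lemma card_le_finrank_of_mem {n k : ℕ} (W : Submodule L (Fin n → L))
    (v : Fin k → (Fin n → L)) (h : LinearIndependent L v) (hm : ∀ i, v i ∈ W) :
    k ≤ Module.finrank L W := by
  let u : Fin k → W := fun i => ⟨v i, hm i⟩
  have hu : LinearIndependent L u := h.of_comp W.subtype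
  simpa using hu.fintype_card_le_finrank

/-- The kernel dimension of a matrix is unchanged by a field embedding of the entries. -/
private lemma finrank_ker_map (f : F →+* L) {n : ℕ} (M : Matrix (Fin n) (Fin n) F) :
    Module.finrank L (LinearMap.ker (Matrix.toLin' (M.map f))) =
      Module.finrank F (LinearMap.ker (Matrix.toLin' M)) := by
  have hnull : Module.finrank F (LinearMap.ker (Matrix.toLin' M)) ≤
      Module.finrank L (LinearMap.ker (Matrix.toLin' (M.map f))) := by
    obtain ⟨v, hv, hvm⟩ := exists_linIndep_of_submodule (LinearMap.ker (Matrix.toLin' M))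
    refine card_le_finrank_of_mem _ (fun i => f ∘ v i) (linearIndependent_comp_map f hv) ?_
    intro i
    have h0 : M.mulVec (v i) = 0 := by
      have := hvm i
      rwa [LinearMap.mem_ker, Matrix.toLin'_apply] at this
    rw [LinearMap.mem_ker, Matrix.toLin'_apply, map_mulVec', h0]
    funext j; simp
  have hrank : Module.finrank F (LinearMap.range (Matrix.toLin' M)) ≤
      Module.finrank L (LinearMap.range (Matrix.toLin' (M.map f))) := by
    obtain ⟨v, hv, hvm⟩ := exists_linIndep_of_submodule (LinearMap.range (Matrix.toLin' M))
    refine card_le_finrank_of_mem _ (fun i => f ∘ v i) (linearIndependent_comp_map f hv) ?_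
    intro i
    obtain ⟨x, hx⟩ := hvm i
    rw [Matrix.toLin'_apply] at hx
    exact ⟨f ∘ x, by rw [Matrix.toLin'_apply, map_mulVec', hx]⟩
  have hF := LinearMap.finrank_range_add_finrank_ker (Matrix.toLin' M)
  have hL := LinearMap.finrank_range_add_finrank_ker (Matrix.toLin' (M.map f))
  have hFn : Module.finrank F (Fin n → F) = n := by simp
  have hLn : Module.finrank L (Fin n → L) = n := by simp
  omega

/-- Eigenspace of `toLin' A` as a matrix kernel. -/
private lemma eigenspace_toLin'_eq {n : ℕ} (A : Matrix (Fin n) (Fin n) F) (μ : F) :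
    Module.End.eigenspace (Matrix.toLin' A) μ =
      LinearMap.ker (Matrix.toLin' (A - μ • 1)) := by
  rw [Module.End.eigenspace_def]
  congr 1
  have hs : Matrix.toLin' (μ • (1 : Matrix (Fin n) (Fin n) F)) =
      μ • (LinearMap.id : (Fin n → F) →ₗ[F] (Fin n → F)) := by
    rw [_root_.map_smul, Matrix.toLin'_one]
  rw [map_sub, hs]
  rfl

/-- Key reduction: for a field embedding `g : F →+* ℝ` and a rational matrix `T`,
the eigenspace of `T` over `ℝ` for eigenvalue `g r` has dimension equal to the
`F`-dimension of the kernel of `T - r • 1` over `F`. -/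
private lemma finrank_eigen_eq {n : ℕ} (T : Matrix (Fin n) (Fin n) ℚ) (r : F)
    (g : F →+* ℝ) :
    Module.finrank ℝ
        (Module.End.eigenspace (Matrix.toLin' (T.map ((↑) : ℚ → ℝ))) (g r)) =
      Module.finrank F
        (LinearMap.ker (Matrix.toLin' (T.map ((↑) : ℚ → F) - r • 1))) := by
  have hmap : (T.map ((↑) : ℚ → F) - r • 1).map g =
      T.map ((↑) : ℚ → ℝ) - (g r) • 1 := by
    ext i j
    simp only [Matrix.map_apply, Matrix.sub_apply, Matrix.smul_apply, Matrix.one_apply]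
    rw [map_sub, map_ratCast]
    by_cases h : i = j <;> simp [h]
  rw [eigenspace_toLin'_eq, ← hmap, finrank_ker_map g]

end Transfer

set_option maxHeartbeats 1000000 in
/-- If `T` is a square matrix with rational entries (regarded over `ℝ`) and `K` is a
positive integer which is not a perfect square, then the eigenspaces of `T` for the
eigenvalues `√K` and `-√K` have the same dimension. -/
theorem eigenspace_sqrt_dim_eq (n : ℕ) (T : Matrix (Fin n) (Fin n) ℚ) (K : ℕ)
    (hK : 0 < K) (hns : ¬ IsSquare K) :
    Module.finrank ℝ
        (Module.End.eigenspace (Matrix.toLin' (T.map ((↑) : ℚ → ℝ))) (Real.sqrt K)) =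
      Module.finrank ℝ
        (Module.End.eigenspace (Matrix.toLin' (T.map ((↑) : ℚ → ℝ))) (-Real.sqrt K)) := by
  have hirr : Irrational (Real.sqrt K) := irrational_sqrt_natCast_iff.mpr hns
  set p : ℚ[X] := X ^ 2 - C (K : ℚ) with hp
  have hmonic : p.Monic := monic_X_pow_sub_C _ (by norm_num)
  have hdeg : p.natDegree = 2 := by rw [hp]; exact natDegree_X_pow_sub_C
  have hirred : Irreducible p := by
    rw [hmonic.irreducible_iff_roots_eq_zero_of_degree_le_three
      (by rw [hdeg]) (by rw [hdeg]; norm_num)]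
    rw [Multiset.eq_zero_iff_forall_notMem]
    intro r hr
    rw [mem_roots hmonic.ne_zero] at hr
    have hr2 : r ^ 2 = (K : ℚ) := by
      have := hr
      rw [IsRoot.def, hp] at this
      simp only [eval_sub, eval_pow, eval_X, eval_natCast, eval_C, sub_eq_zero] at this
      exact this
    apply hirr
    have hcast : ((r : ℝ)) ^ 2 = (K : ℝ) := by exact_mod_cast hr2
    refine ⟨|r|, ?_⟩
    rw [← hcast, Real.sqrt_sq_eq_abs]
    push_cast
    rfl
  haveI : Fact (Irreducible p) := ⟨hirred⟩
  have hK0 : (0 : ℝ) ≤ (K : ℝ) := by positivity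
  have hplus : (Real.sqrt K) ^ 2 = (K : ℝ) := Real.sq_sqrt hK0
  have hminus : (-(Real.sqrt K)) ^ 2 = (K : ℝ) := by rw [neg_pow]; simp [hplus]
  have heval : ∀ s : ℝ, s ^ 2 = (K : ℝ) → p.eval₂ (algebraMap ℚ ℝ) s = 0 := by
    intro s hs
    rw [hp]
    simp [hs]
  let fp : AdjoinRoot p →+* ℝ :=
    AdjoinRoot.lift (algebraMap ℚ ℝ) (Real.sqrt K) (heval _ hplus)
  let fm : AdjoinRoot p →+* ℝ :=
    AdjoinRoot.lift (algebraMap ℚ ℝ) (-(Real.sqrt K)) (heval _ hminus)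
  have h1 := finrank_eigen_eq T (AdjoinRoot.root p) fp
  have h2 := finrank_eigen_eq T (AdjoinRoot.root p) fm
  rw [show fp (AdjoinRoot.root p) = Real.sqrt K from AdjoinRoot.lift_root _] at h1
  rw [show fm (AdjoinRoot.root p) = -(Real.sqrt K) from AdjoinRoot.lift_root _] at h2
  rw [h1, h2]
end

section
/- Let G be a finite simple graph on a vertex set V, and let D be a family of 3-element subsets of V (triangles) such that: (i) two distinct vertices u, v are adjacent in G if and only if they both belong to some member of D; (ii) any two distinct vertices belong to at most one common member of D; (iii) every vertex belongs to exactly 3 members of D. Let T be the bipartite simple graph on V ⊔ D in which v ∈ V is adjacent to t ∈ D if and only if v ∈ t. Suppose f: V → ℝ satisfies A_G f = μ f with μ ≠ −3, and let λ ∈ ℝ satisfy λ² = μ + 3 (so λ ≠ 0). Define F on V ⊔ D by F(v) = f(v) for v ∈ V and F(t) = (1/λ)·Σ_{w ∈ t} f(w) for t ∈ D. Then A_T F = λ F. -/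
/-- The `(Δ-Y)`-transformation associated to a family `D` of triangles on a vertex
set `V`: the bipartite graph on `V ⊕ D` in which `v : V` is adjacent to `t : D`
iff `v ∈ t`. -/
def DeltaY {V : Type*} (D : Finset (Finset V)) : SimpleGraph (V ⊕ {t // t ∈ D}) where
  Adj a b := (∃ v t, a = Sum.inl v ∧ b = Sum.inr t ∧ v ∈ t.val) ∨
             (∃ v t, a = Sum.inr t ∧ b = Sum.inl v ∧ v ∈ t.val)
  symm := by
    constructor
    rintro a b (⟨v, t, rfl, rfl, h⟩ | ⟨v, t, rfl, rfl, h⟩)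
    · exact Or.inr ⟨v, t, rfl, rfl, h⟩
    · exact Or.inl ⟨v, t, rfl, rfl, h⟩
  loopless := by
    constructor
    rintro a (⟨v, t, h1, h2, _⟩ | ⟨v, t, h1, h2, _⟩) <;> subst h1 <;> simp at h2

instance {V : Type*} [DecidableEq V] [Fintype V] (D : Finset (Finset V)) :
    DecidableRel (DeltaY D).Adj := fun a b =>
  inferInstanceAs (Decidable ((∃ v t, a = Sum.inl v ∧ b = Sum.inr t ∧ v ∈ t.val) ∨
      (∃ v t, a = Sum.inr t ∧ b = Sum.inl v ∧ v ∈ t.val)))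

/-!
At a triangle `t` the neighbours in `T` are the three vertices of `t`, so
`(A_T F)(t) = Σ_{w ∈ t} f w = λ F(t)`. At a vertex `v`, the triangles through `v`, with `v`
removed, partition the neighbourhood of `v` in `G`; hence summing `Σ_{w ∈ t} f w` over the three
triangles through `v` gives `3 f(v) + (A_G f)(v) = (μ + 3) f(v) = λ² f(v)`, and
`(A_T F)(v) = λ f(v)`.
-/

open Finset Matrix

namespace DeltaY

variable {V : Type*} {D : Finset (Finset V)} {v : V} {t : {t // t ∈ D}}

@[simp] lemma adj_inl_inr : (DeltaY D).Adj (Sum.inl v) (Sum.inr t) ↔ v ∈ t.1 := by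
  simp [DeltaY]

@[simp] lemma adj_inr_inl : (DeltaY D).Adj (Sum.inr t) (Sum.inl v) ↔ v ∈ t.1 := by
  simp [DeltaY]

@[simp] lemma not_adj_inl_inl (w : V) : ¬(DeltaY D).Adj (Sum.inl v) (Sum.inl w) := by
  simp [DeltaY]

@[simp] lemma not_adj_inr_inr (s : {t // t ∈ D}) : ¬(DeltaY D).Adj (Sum.inr t) (Sum.inr s) := by
  simp [DeltaY]

variable [Fintype V] [DecidableEq V] {R : Type*} [NonAssocSemiring R]

lemma adjMatrix_mulVec_sumElim_inl (a : V → R) (b : Finset V → R) :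
    ((DeltaY D).adjMatrix R *ᵥ Sum.elim a fun t : {t // t ∈ D} => b t.1) (Sum.inl v) =
      ∑ t ∈ D with v ∈ t, b t := by
  simp only [Matrix.mulVec, dotProduct, Fintype.sum_sum_type, SimpleGraph.adjMatrix_apply,
    adj_inl_inr, not_adj_inl_inl, Sum.elim_inr, ite_mul, one_mul, zero_mul, if_false,
    sum_const_zero, zero_add]
  rw [sum_filter]
  exact sum_coe_sort D fun s => if v ∈ s then b s else 0

lemma adjMatrix_mulVec_inr (g : V ⊕ {t // t ∈ D} → R) :
    ((DeltaY D).adjMatrix R *ᵥ g) (Sum.inr t) = ∑ w ∈ t.1, g (Sum.inl w) := by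
  simp only [Matrix.mulVec, dotProduct, Fintype.sum_sum_type, SimpleGraph.adjMatrix_apply,
    adj_inr_inl, not_adj_inr_inr, ite_mul, one_mul, zero_mul, if_false,
    sum_const_zero, add_zero]
  exact Fintype.sum_ite_mem t.1 _

end DeltaY

section EdgePartition

variable {V : Type*} [DecidableEq V] {G : SimpleGraph V} {D : Finset (Finset V)}

lemma Finset.pairwiseDisjoint_filter_mem_erase
    (huniq : ∀ u v : V, u ≠ v → ∀ t₁ ∈ D, ∀ t₂ ∈ D,
      u ∈ t₁ → v ∈ t₁ → u ∈ t₂ → v ∈ t₂ → t₁ = t₂) (v : V) :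
    (({t ∈ D | v ∈ t} : Finset _) : Set (Finset V)).PairwiseDisjoint (·.erase v) := by
  intro t₁ h₁ t₂ h₂ hne
  simp only [mem_coe, mem_filter] at h₁ h₂
  refine disjoint_left.mpr fun u hu₁ hu₂ => hne ?_
  rw [mem_erase] at hu₁ hu₂
  exact huniq u v hu₁.1 t₁ h₁.1 t₂ h₂.1 hu₁.2 h₁.2 hu₂.2 h₂.2

variable [Fintype V] [DecidableRel G.Adj]

lemma SimpleGraph.neighborFinset_eq_biUnion_erase
    (hadj : ∀ u v : V, u ≠ v → (G.Adj u v ↔ ∃ t ∈ D, u ∈ t ∧ v ∈ t)) (v : V) :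
    G.neighborFinset v = {t ∈ D | v ∈ t}.biUnion (·.erase v) := by
  ext u
  simp only [mem_biUnion, mem_filter, mem_erase, SimpleGraph.mem_neighborFinset]
  constructor
  · intro h
    obtain ⟨t, htD, hvt, hut⟩ := (hadj v u (G.ne_of_adj h)).mp h
    exact ⟨t, ⟨htD, hvt⟩, (G.ne_of_adj h).symm, hut⟩
  · rintro ⟨t, ⟨htD, hvt⟩, huv, hut⟩
    exact (hadj v u (Ne.symm huv)).mpr ⟨t, htD, hvt, hut⟩

lemma SimpleGraph.sum_sum_filter_mem_eq {M : Type*} [AddCommMonoid M]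
    (hadj : ∀ u v : V, u ≠ v → (G.Adj u v ↔ ∃ t ∈ D, u ∈ t ∧ v ∈ t))
    (huniq : ∀ u v : V, u ≠ v → ∀ t₁ ∈ D, ∀ t₂ ∈ D,
      u ∈ t₁ → v ∈ t₁ → u ∈ t₂ → v ∈ t₂ → t₁ = t₂) (f : V → M) (v : V) :
    ∑ t ∈ D with v ∈ t, ∑ w ∈ t, f w =
      #{t ∈ D | v ∈ t} • f v + ∑ u ∈ G.neighborFinset v, f u := by
  calc ∑ t ∈ D with v ∈ t, ∑ w ∈ t, f w
      = ∑ t ∈ D with v ∈ t, (f v + ∑ w ∈ t.erase v, f w) :=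
        sum_congr rfl fun t ht => (add_sum_erase t f (mem_filter.mp ht).2).symm
    _ = #{t ∈ D | v ∈ t} • f v + ∑ u ∈ G.neighborFinset v, f u := by
        rw [sum_add_distrib, sum_const, G.neighborFinset_eq_biUnion_erase hadj,
          sum_biUnion (pairwiseDisjoint_filter_mem_erase huniq v)]

end EdgePartition

theorem deltaY_eigenfunction_lift_general {V : Type*} [Fintype V] [DecidableEq V]
    (G : SimpleGraph V) [DecidableRel G.Adj] (D : Finset (Finset V))
    (hadj : ∀ u v : V, u ≠ v → (G.Adj u v ↔ ∃ t ∈ D, u ∈ t ∧ v ∈ t))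
    (huniq : ∀ u v : V, u ≠ v → ∀ t₁ ∈ D, ∀ t₂ ∈ D,
      u ∈ t₁ → v ∈ t₁ → u ∈ t₂ → v ∈ t₂ → t₁ = t₂)
    (hdeg : ∀ v : V, (D.filter (fun t => v ∈ t)).card = 3)
    (f : V → ℝ) (mu lam : ℝ)
    (hf : (G.adjMatrix ℝ).mulVec f = mu • f)
    (hmu : mu ≠ -3) (hlam : lam ^ 2 = mu + 3) :
    ((DeltaY D).adjMatrix ℝ).mulVec
        (Sum.elim f fun t => (1 / lam) * ∑ w ∈ t.val, f w) =
      lam • Sum.elim f fun t => (1 / lam) * ∑ w ∈ t.val, f w := by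
  have hlam₀ : lam ≠ 0 := by
    rintro rfl
    exact hmu (by linarith)
  funext x
  cases x with
  | inl v =>
    have hneighbors : ∑ u ∈ G.neighborFinset v, f u = mu * f v := by
      rw [← SimpleGraph.adjMatrix_mulVec_apply, hf, Pi.smul_apply, smul_eq_mul]
    rw [DeltaY.adjMatrix_mulVec_sumElim_inl (b := fun s => 1 / lam * ∑ w ∈ s, f w), ← mul_sum,
      G.sum_sum_filter_mem_eq hadj huniq, hdeg, hneighbors]
    simp only [Sum.elim_inl, Pi.smul_apply, smul_eq_mul]
    rw [nsmul_eq_mul, Nat.cast_ofNat, ← add_mul, add_comm, ← hlam]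
    field_simp
  | inr t =>
    rw [DeltaY.adjMatrix_mulVec_inr]
    simp only [Sum.elim_inl, Sum.elim_inr, Pi.smul_apply, smul_eq_mul]
    field_simp

/-- If `f` satisfies `A_G f = μ f` with `μ ≠ -3` and `λ² = μ + 3`, then the extension
`F` of `f` to the `(Δ-Y)`-transformation `T = DeltaY D`, defined on a triangle `t` by
`F(t) = (1/λ)·Σ_{w ∈ t} f(w)`, satisfies `A_T F = λ F`. -/
theorem deltaY_eigenfunction_lift {V : Type*} [Fintype V] [DecidableEq V]
    (G : SimpleGraph V) [DecidableRel G.Adj] (D : Finset (Finset V))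
    (hcard : ∀ t ∈ D, t.card = 3)
    (hadj : ∀ u v : V, u ≠ v → (G.Adj u v ↔ ∃ t ∈ D, u ∈ t ∧ v ∈ t))
    (huniq : ∀ u v : V, u ≠ v → ∀ t₁ ∈ D, ∀ t₂ ∈ D,
      u ∈ t₁ → v ∈ t₁ → u ∈ t₂ → v ∈ t₂ → t₁ = t₂)
    (hdeg : ∀ v : V, (D.filter (fun t => v ∈ t)).card = 3)
    (f : V → ℝ) (mu lam : ℝ)
    (hf : (G.adjMatrix ℝ).mulVec f = mu • f)
    (hmu : mu ≠ -3) (hlam : lam ^ 2 = mu + 3) :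
    ((DeltaY D).adjMatrix ℝ).mulVec
        (Sum.elim f fun t => (1 / lam) * ∑ w ∈ t.val, f w) =
      lam • Sum.elim f fun t => (1 / lam) * ∑ w ∈ t.val, f w :=
  deltaY_eigenfunction_lift_general G D hadj huniq hdeg f mu lam hf hmu hlam
end

section
/- Let p be an odd prime and n = (p−1)/2. Suppose f is a complex-valued function on the vertices of Π_p' that is constant on each wheel boundary, say f(v) = c_i for all v ∈ ∂W_i (1 ≤ i ≤ n), and suppose c_1 + c_2 + ⋯ + c_n = 0. Then the adjacency operator of Π_p' annihilates f: (A f)(v) = 0 for every vertex v of Π_p'. In particular, the kernel of the adjacency operator of Π_p' has dimension at least (p−3)/2. -/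
/-!
A vertex `[λ, μ]` of `Π_p'` has exactly one neighbour on the principal axis, namely
`[μ⁻¹, 0]`; its neighbours in `Π_p'` are the classes of `((λω - 1)/μ, ω)` for `ω ∈ (ℤ/p)ˣ`, and
the one with parameter `ω` lies on the wheel boundary of `[ω⁻¹, 0]`. Hence
`(A f)([λ, μ]) = ∑_ω c([ω⁻¹, 0])`, which is `2 ∑ c_i` since `ω` and `-ω` give the same axis
vertex. For the dimension bound, `c ↦ c ∘ wheel` embeds the `(p - 3)/2`-dimensional space
`{c | ∑ c_i = 0}` into the kernel.
-/

open Finset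

namespace Platonic

section General

variable {N : ℕ}

lemma gcd_val_eq_one_of_fst_unit (a : (ZMod N)ˣ) (b : ZMod N) :
    Nat.gcd (Nat.gcd (a : ZMod N).val b.val) N = 1 :=
  Nat.Coprime.coprime_dvd_left (Nat.gcd_dvd_left _ _) (ZMod.val_coe_unit_coprime a)

lemma gcd_val_eq_one_of_snd_unit (a : ZMod N) (b : (ZMod N)ˣ) :
    Nat.gcd (Nat.gcd a.val (b : ZMod N).val) N = 1 :=
  Nat.Coprime.coprime_dvd_left (Nat.gcd_dvd_right _ _) (ZMod.val_coe_unit_coprime b)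

def pairOfFstUnit (a : (ZMod N)ˣ) (b : ZMod N) : PlatonicPair N :=
  ⟨(a, b), gcd_val_eq_one_of_fst_unit a b⟩

def pairOfSndUnit (a : ZMod N) (b : (ZMod N)ˣ) : PlatonicPair N :=
  ⟨(a, b), gcd_val_eq_one_of_snd_unit a b⟩

def det (x y : PlatonicPair N) : ZMod N := x.val.1 * y.val.2 - x.val.2 * y.val.1

lemma mk_eq_mk_iff {x y : PlatonicPair N} :
    (⟦x⟧ : PlatonicVertex N) = ⟦y⟧ ↔ y.val = x.val ∨ y.val = -x.val :=
  Quotient.eq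

lemma det_eq_or_eq_neg_of_mk_eq {x x' y y' : PlatonicPair N}
    (hx : (⟦x⟧ : PlatonicVertex N) = ⟦x'⟧) (hy : (⟦y⟧ : PlatonicVertex N) = ⟦y'⟧) :
    det x' y' = det x y ∨ det x' y' = -det x y := by
  unfold det
  rcases mk_eq_mk_iff.mp hx with hx | hx <;> rcases mk_eq_mk_iff.mp hy with hy | hy <;>
    [left; right; right; left] <;> rw [hx, hy] <;> simp only [Prod.fst_neg, Prod.snd_neg] <;> ring

lemma adj_mk_iff_s16 [Nontrivial (ZMod N)] {x y : PlatonicPair N} :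
    (Platonic N).Adj ⟦x⟧ ⟦y⟧ ↔ det x y = 1 ∨ det x y = -1 := by
  constructor
  · rintro ⟨-, u, w, hu, hw, hdet⟩
    rcases det_eq_or_eq_neg_of_mk_eq hu hw with h | h <;> rw [h] <;>
      rcases hdet with hdet | hdet <;> simp [det, hdet]
  · intro hdet
    refine ⟨fun hxy => ?_, x, y, rfl, rfl, hdet⟩
    have hzero : det x y = 0 := by
      rcases det_eq_or_eq_neg_of_mk_eq rfl hxy with h | h <;> rw [h] <;> simp [det, mul_comm]
    rcases hdet with h | h <;> simp [hzero] at h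

lemma secondNZ_mk_iff {x : PlatonicPair N} : secondNZ N ⟦x⟧ ↔ x.val.2 ≠ 0 := by
  refine ⟨fun h => h x rfl, fun h y hy => ?_⟩
  rcases mk_eq_mk_iff.mp hy.symm with hy | hy <;> simpa [hy] using h

lemma fst_ne_zero_of_snd_eq_zero [Fact (1 < N)] {x : PlatonicPair N} (h : x.val.2 = 0) :
    x.val.1 ≠ 0 := by
  intro h1
  have hx := x.prop
  rw [h1, h, ZMod.val_zero, Nat.gcd_zero_left, Nat.gcd_zero_left] at hx
  exact (Fact.out : 1 < N).ne' hx

def axis (s : (ZMod N)ˣ) : PlatonicVertex N := ⟦pairOfFstUnit s 0⟧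

lemma axis_eq_axis_iff {s t : (ZMod N)ˣ} : axis s = axis t ↔ t = s ∨ t = -s := by
  simp [axis, pairOfFstUnit, mk_eq_mk_iff, Units.ext_iff]

lemma modPlatonic_adj_iff {u w : {v : PlatonicVertex N | secondNZ N v}} :
    (ModPlatonic N).Adj u w ↔ (Platonic N).Adj u.val w.val :=
  Iff.rfl

def axisVertices (N : ℕ) [NeZero N] : Finset (PlatonicVertex N) :=
  univ.filter fun a => ∃ x : PlatonicPair N, ⟦x⟧ = a ∧ x.val.2 = 0

lemma axis_mem_axisVertices [NeZero N] (s : (ZMod N)ˣ) : axis s ∈ axisVertices N :=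
  mem_filter.mpr ⟨mem_univ _, pairOfFstUnit s 0, rfl, rfl⟩

end General

section Prime

variable {p : ℕ} [Fact p.Prime]

lemma mem_axisVertices_iff [NeZero p] {a : PlatonicVertex p} :
    a ∈ axisVertices p ↔ ∃ s, axis s = a := by
  refine ⟨fun ha => ?_, fun ⟨s, hs⟩ => hs ▸ axis_mem_axisVertices s⟩
  obtain ⟨x, rfl, hx⟩ := (mem_filter.mp ha).2
  refine ⟨Units.mk0 x.val.1 (fst_ne_zero_of_snd_eq_zero hx), mk_eq_mk_iff.mpr (Or.inl ?_)⟩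
  exact Prod.ext rfl hx

lemma adj_axis_iff {x : PlatonicPair p} {ω : (ZMod p)ˣ} (hx : x.val.2 = ω) (s : (ZMod p)ˣ) :
    (Platonic p).Adj ⟦x⟧ (axis s) ↔ axis s = axis ω⁻¹ := by
  rw [axis, adj_mk_iff_s16, ← axis, axis_eq_axis_iff]
  simp only [det, pairOfFstUnit, hx, mul_zero, zero_sub, Units.ext_iff, Units.val_inv_eq_inv_val,
    Units.val_neg]
  constructor
  · rintro (h | h)
    · exact Or.inr (inv_eq_of_mul_eq_one_right (by linear_combination h))
    · exact Or.inl (inv_eq_of_mul_eq_one_right (by linear_combination -h))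
  · rintro (h | h)
    · exact Or.inr (by linear_combination (ω : ZMod p) * h - mul_inv_cancel₀ ω.ne_zero)
    · exact Or.inl (by linear_combination -(ω : ZMod p) * h + mul_inv_cancel₀ ω.ne_zero)

def neighborPair (x : PlatonicPair p) (ω : (ZMod p)ˣ) : PlatonicPair p :=
  pairOfSndUnit ((x.val.1 * ω - 1) / x.val.2) ω

lemma det_neighborPair {x : PlatonicPair p} (hx : x.val.2 ≠ 0) (ω : (ZMod p)ˣ) :
    det x (neighborPair x ω) = 1 := by
  simp only [det, neighborPair, pairOfSndUnit]
  field_simp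
  ring

lemma secondNZ_neighborPair (x : PlatonicPair p) (ω : (ZMod p)ˣ) : secondNZ p ⟦neighborPair x ω⟧ :=
  secondNZ_mk_iff.mpr ω.ne_zero

lemma mk_neighborPair_injective (hodd : Odd p) {x : PlatonicPair p} (hx : x.val.2 ≠ 0) :
    Function.Injective fun ω => (⟦neighborPair x ω⟧ : PlatonicVertex p) := by
  intro ω ω' h
  rcases mk_eq_mk_iff.mp h with h | h
  · exact (Units.ext (congrArg Prod.snd h)).symm
  · simp only [neighborPair, pairOfSndUnit, Prod.ext_iff, Prod.fst_neg, Prod.snd_neg] at h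
    refine absurd ?_ (ZMod.ne_neg_self hodd (inv_ne_zero hx))
    field_simp at h
    linear_combination (x.val.1 * h.2 - h.1) / x.val.2

lemma exists_mk_neighborPair_eq {x y : PlatonicPair p} (hx : x.val.2 ≠ 0) (hy : y.val.2 ≠ 0)
    (h : (Platonic p).Adj ⟦x⟧ ⟦y⟧) : ∃ ω, ⟦neighborPair x ω⟧ = (⟦y⟧ : PlatonicVertex p) := by
  simp only [mk_eq_mk_iff, neighborPair, pairOfSndUnit, Prod.ext_iff, Prod.fst_neg, Prod.snd_neg]
  rcases adj_mk_iff_s16.mp h with h | h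
  · refine ⟨Units.mk0 _ hy, Or.inl ⟨?_, rfl⟩⟩
    simp only [det, Units.val_mk0] at h ⊢
    field_simp
    linear_combination -h
  · refine ⟨Units.mk0 _ (neg_ne_zero.mpr hy), Or.inr ⟨?_, by simp⟩⟩
    simp only [det, Units.val_mk0] at h ⊢
    field_simp
    linear_combination -h

lemma adj_mk_neighborPair_axis (x : PlatonicPair p) (ω : (ZMod p)ˣ) :
    (Platonic p).Adj ⟦neighborPair x ω⟧ (axis ω⁻¹) :=
  (adj_axis_iff rfl _).mpr rfl

lemma adjMatrix_mulVec_apply_eq_sum_axis [NeZero p] {R : Type*} [NonAssocSemiring R]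
    (hodd : Odd p) (f : {v : PlatonicVertex p | secondNZ p v} → R) (c : PlatonicVertex p → R)
    (hf : ∀ s v, (Platonic p).Adj v.val (axis s) → f v = c (axis s))
    (v : {v : PlatonicVertex p | secondNZ p v}) :
    ((ModPlatonic p).adjMatrix R).mulVec f v = ∑ s, c (axis s) := by
  obtain ⟨x, hx⟩ := Quotient.exists_rep v.val
  have hx2 : x.val.2 ≠ 0 := v.prop x hx
  let neighbor (ω : (ZMod p)ˣ) : {v : PlatonicVertex p | secondNZ p v} :=
    ⟨⟦neighborPair x ω⟧, secondNZ_neighborPair x ω⟩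
  rw [SimpleGraph.adjMatrix_mulVec_apply]
  calc ∑ u ∈ (ModPlatonic p).neighborFinset v, f u
      = ∑ ω, f (neighbor ω) := by
        refine (sum_nbij neighbor (fun ω _ => ?_) (fun ω _ ω' _ h => ?_) (fun u hu => ?_)
          fun _ _ => rfl).symm
        · rw [SimpleGraph.mem_neighborFinset, modPlatonic_adj_iff, ← hx]
          exact adj_mk_iff_s16.mpr (Or.inl (det_neighborPair hx2 ω))
        · exact mk_neighborPair_injective hodd hx2 (congrArg Subtype.val h)
        · obtain ⟨y, hy⟩ := Quotient.exists_rep u.val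
          rw [mem_coe, SimpleGraph.mem_neighborFinset, modPlatonic_adj_iff, ← hx, ← hy] at hu
          obtain ⟨ω, hω⟩ := exists_mk_neighborPair_eq hx2 (u.prop y hy) hu
          exact ⟨ω, mem_coe.mpr (mem_univ ω), Subtype.ext (hω.trans hy)⟩
    _ = ∑ ω : (ZMod p)ˣ, c (axis ω⁻¹) :=
        sum_congr rfl fun ω _ => hf _ _ (adj_mk_neighborPair_axis x ω)
    _ = ∑ s, c (axis s) := Fintype.sum_equiv (Equiv.inv _) _ _ fun _ => rfl

lemma card_filter_axis_eq_two (hodd : Odd p) (s : (ZMod p)ˣ) : #{t | axis t = axis s} = 2 := by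
  have hs : s ≠ -s := fun h => ZMod.ne_neg_self hodd s.ne_zero (congrArg Units.val h)
  rw [← card_pair hs]
  congr 1
  ext t
  simp only [mem_filter, mem_univ, true_and, mem_insert, mem_singleton, axis_eq_axis_iff]
  constructor <;> rintro (rfl | rfl) <;> simp

lemma sum_axis_eq_two_smul [NeZero p] {M : Type*} [AddCommMonoid M] (hodd : Odd p)
    (c : PlatonicVertex p → M) : ∑ s, c (axis s) = 2 • ∑ a ∈ axisVertices p, c a := by
  have himage : univ.image axis = axisVertices p := by
    ext a
    simp [mem_axisVertices_iff]
  rw [sum_comp, himage, smul_sum]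
  refine sum_congr rfl fun a ha => ?_
  obtain ⟨s, rfl⟩ := mem_axisVertices_iff.mp ha
  rw [card_filter_axis_eq_two hodd]

lemma two_mul_card_axisVertices [NeZero p] (hodd : Odd p) : 2 * #(axisVertices p) = p - 1 := by
  simpa [Nat.totient_prime (Fact.out : p.Prime)] using
    (sum_axis_eq_two_smul hodd fun _ => (1 : ℕ)).symm

variable [NeZero p]

/-- `v ∈ ∂W_i` exactly when `wheel v = [i, 0]`. -/
noncomputable def wheel (v : {v : PlatonicVertex p | secondNZ p v}) : axisVertices p :=
  ⟨axis (Units.mk0 _ (v.prop _ (Quotient.out_eq v.val)))⁻¹, axis_mem_axisVertices _⟩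

lemma wheel_eq_of_adj {v : {v : PlatonicVertex p | secondNZ p v}} {s : (ZMod p)ˣ}
    (h : (Platonic p).Adj v.val (axis s)) : (wheel v : PlatonicVertex p) = axis s := by
  rw [← Quotient.out_eq v.val, adj_axis_iff (Units.val_mk0 _).symm] at h
  exact h.symm

lemma wheel_surjective : Function.Surjective (wheel (p := p)) := by
  rintro ⟨a, ha⟩
  obtain ⟨s, rfl⟩ := mem_axisVertices_iff.mp ha
  let x := pairOfSndUnit 0 s⁻¹
  refine ⟨⟨⟦x⟧, secondNZ_mk_iff.mpr s⁻¹.ne_zero⟩, Subtype.ext (wheel_eq_of_adj ?_)⟩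
  exact (adj_axis_iff (x := x) rfl s).mpr (by rw [inv_inv])

lemma adjMatrix_mulVec_comp_wheel {K : Type*} [Field K] (hodd : Odd p)
    (c : axisVertices p → K) (hc : ∑ a, c a = 0) :
    ((ModPlatonic p).adjMatrix K).mulVec (c ∘ wheel) = 0 := by
  let c' (a : PlatonicVertex p) : K := if h : a ∈ axisVertices p then c ⟨a, h⟩ else 0
  have hc' : ∑ a ∈ axisVertices p, c' a = 0 := by
    rw [← sum_coe_sort, ← hc]
    exact sum_congr rfl fun a _ => dif_pos a.prop
  funext v
  rw [adjMatrix_mulVec_apply_eq_sum_axis hodd _ c' (fun s v h => ?_), sum_axis_eq_two_smul hodd,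
    hc', smul_zero, Pi.zero_apply]
  simp only [Function.comp_apply, c', dif_pos (axis_mem_axisVertices s)]
  congr 1
  exact Subtype.ext (wheel_eq_of_adj h)

lemma card_axisVertices_sub_one_le_finrank_ker {K : Type*} [Field K] (hodd : Odd p) :
    #(axisVertices p) - 1 ≤
      Module.finrank K (LinearMap.ker ((ModPlatonic p).adjMatrix K).mulVecLin) := by
  let σ : (axisVertices p → K) →ₗ[K] K := ∑ a, LinearMap.proj a
  let Φ := (LinearMap.funLeft K K wheel).domRestrict (LinearMap.ker σ)
  have hΦ : ∀ c, Φ c ∈ LinearMap.ker ((ModPlatonic p).adjMatrix K).mulVecLin := fun c =>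
    adjMatrix_mulVec_comp_wheel hodd c.val (by simpa [σ] using c.prop)
  have hinj : Function.Injective (Φ.codRestrict _ hΦ) := fun c d h =>
    Subtype.ext (wheel_surjective.injective_comp_right (congrArg Subtype.val h))
  have hrank := σ.finrank_range_add_finrank_ker
  have hrange : Module.finrank K (LinearMap.range σ) ≤ 1 :=
    (Submodule.finrank_le _).trans (Module.finrank_self K).le
  rw [Module.finrank_fintype_fun_eq_card, Fintype.card_coe] at hrank
  have := LinearMap.finrank_le_finrank_of_injective hinj
  omega

end Prime

end Platonic

/-- If a function on the vertices of `Π_p'` is constant on each wheel boundary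
`∂W_i` with values summing to zero over the wheels, then the adjacency operator of
`Π_p'` annihilates it.  In particular, the kernel of the adjacency operator of
`Π_p'` has dimension at least `(p-3)/2`. -/
theorem modPlatonic_kernel (p : ℕ) (hp : p.Prime) (hodd : Odd p) [NeZero p] :
    (∀ (f : {v : PlatonicVertex p | secondNZ p v} → ℂ) (c : PlatonicVertex p → ℂ),
      (∀ a : PlatonicVertex p, (∃ x : PlatonicPair p, ⟦x⟧ = a ∧ x.val.2 = 0) →
        ∀ v : {v : PlatonicVertex p | secondNZ p v},
          (Platonic p).Adj v.val a → f v = c a) →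
      (∑ a ∈ Finset.univ.filter
          (fun a : PlatonicVertex p => ∃ x : PlatonicPair p, ⟦x⟧ = a ∧ x.val.2 = 0),
        c a) = 0 →
      ((ModPlatonic p).adjMatrix ℂ).mulVec f = 0) ∧
    (p - 3) / 2 ≤
      Module.finrank ℂ (LinearMap.ker (((ModPlatonic p).adjMatrix ℂ).mulVecLin)) := by
  have : Fact p.Prime := ⟨hp⟩
  refine ⟨fun f c hf hsum => ?_, ?_⟩
  · funext v
    have hf' s v := hf (Platonic.axis s) ⟨Platonic.pairOfFstUnit s 0, rfl, rfl⟩ v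
    rw [Platonic.adjMatrix_mulVec_apply_eq_sum_axis hodd f c hf' v,
      Platonic.sum_axis_eq_two_smul hodd, Platonic.axisVertices, hsum, smul_zero, Pi.zero_apply]
  · have hcard := Platonic.two_mul_card_axisVertices (p := p) hodd
    have hker := Platonic.card_axisVertices_sub_one_le_finrank_ker (K := ℂ) hodd
    omega
end
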